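/- Let d ≥ 1, let p be a real number with 2 ≤ p < ∞, let c > 0, let x ∈ ℝ^d satisfy (∑_{i=1}^d |x_i|^p)^{1/p} ≤ c, and let ε ∈ {−1, +1}^d be a sign vector. Then ∑_{i=1}^d ( c/d^{1/p} − x_i ε_i ) ≥ (d^{1/p}/(2c)) · ∑_{i=1}^d ( c/d^{1/p} − x_i ε_i )². -/

import Mathlib

/-!
Since `ε i ^ 2 = 1`, expanding the squares gives
`∑ (a - x i * ε i) ^ 2 = d * a ^ 2 - 2 * a * ∑ x i * ε i + ∑ x i ^ 2`, so with `a = c / d ^ (1 / p)`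
the claim reduces to `∑ x i ^ 2 ≤ d * a ^ 2 = c ^ 2 * d ^ (1 - 2 / p)`: the comparison of the
`ℓ²` and `ℓᵖ` norms, i.e. the power-mean inequality with exponent `p / 2 ≥ 1` applied to `x i ^ 2`.
-/

open Finset

theorem sum_sq_le_card_mul_sq_of_sum_rpow_le {ι : Type*} [Fintype ι] {p a : ℝ} (hp : 2 ≤ p)
    (ha : 0 ≤ a) (x : ι → ℝ) (hx : ∑ i, |x i| ^ p ≤ Fintype.card ι * a ^ p) :
    ∑ i, x i ^ 2 ≤ Fintype.card ι * a ^ 2 := by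
  set n : ℝ := (Fintype.card ι : ℝ)
  have hq : 1 ≤ p / 2 := by linarith
  have hsq_rpow (t : ℝ) : (t ^ 2) ^ (p / 2) = |t| ^ p := by
    rw [← sq_abs, ← Real.rpow_natCast, ← Real.rpow_mul (abs_nonneg t)]
    norm_num [mul_div_cancel₀]
  suffices (∑ i, x i ^ 2) ^ (p / 2) ≤ (n * a ^ 2) ^ (p / 2) from
    (Real.rpow_le_rpow_iff (by positivity) (by positivity) (by linarith)).mp this
  calc (∑ i, x i ^ 2) ^ (p / 2)
      ≤ n ^ (p / 2 - 1) * ∑ i, (x i ^ 2) ^ (p / 2) := by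
        simpa using Real.rpow_sum_le_const_mul_sum_rpow_of_nonneg (s := univ) hq
          (fun i _ => sq_nonneg (x i))
    _ ≤ n ^ (p / 2 - 1) * (n * a ^ p) := by
        simp only [hsq_rpow]
        gcongr
    _ = (n * a ^ 2) ^ (p / 2) := by
        rw [Real.mul_rpow (by positivity) (by positivity), hsq_rpow, abs_of_nonneg ha,
          ← mul_assoc, ← Real.rpow_add_one' (by positivity) (by linarith)]
        ring_nf

theorem sum_sub_mul_sign_sq_le {ι : Type*} [Fintype ι] (a : ℝ) (x ε : ι → ℝ)
    (hε : ∀ i, ε i = 1 ∨ ε i = -1) (hx : ∑ i, x i ^ 2 ≤ Fintype.card ι * a ^ 2) :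
    ∑ i, (a - x i * ε i) ^ 2 ≤ 2 * a * ∑ i, (a - x i * ε i) := by
  have hsq (i : ι) : (x i * ε i) ^ 2 = x i ^ 2 := by
    rcases hε i with h | h <;> simp [h]
  have hexpand (i : ι) : (a - x i * ε i) ^ 2 = a ^ 2 - 2 * a * (x i * ε i) + x i ^ 2 := by
    rw [sub_sq, hsq]
  simp only [hexpand, sum_add_distrib, sum_sub_distrib, ← mul_sum, sum_const, card_univ,
    nsmul_eq_mul]
  linarith

/-- Lemma 4 (quadratic-lower-bound trick): for `2 ≤ p < ∞`, `c > 0`, `x` in the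
`L^p` ball of radius `c`, and a sign vector `ε ∈ {−1,+1}^d`,
`∑ i (c/d^{1/p} − x_i ε_i) ≥ (d^{1/p}/(2c)) ∑ i (c/d^{1/p} − x_i ε_i)²`. -/
theorem lp_quadratic_trick (d : ℕ) (hd : 1 ≤ d) (p c : ℝ)
    (hp : 2 ≤ p) (hc : 0 < c)
    (x : Fin d → ℝ) (hx : (∑ i, |x i| ^ p) ^ (1 / p) ≤ c)
    (ε : Fin d → ℝ) (hε : ∀ i, ε i = 1 ∨ ε i = -1) :
    ∑ i, (c / (d : ℝ) ^ (1 / p) - x i * ε i) ≥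
      ((d : ℝ) ^ (1 / p) / (2 * c)) *
        ∑ i, (c / (d : ℝ) ^ (1 / p) - x i * ε i) ^ 2 := by
  have hp0 : 0 < p := by linarith
  have hd0 : (0 : ℝ) < d := by exact_mod_cast hd
  set a := c / (d : ℝ) ^ (1 / p)
  have ha : 0 < a := by positivity
  have hda : (d : ℝ) * a ^ p = c ^ p := by
    rw [Real.div_rpow hc.le (by positivity), one_div, Real.rpow_inv_rpow hd0.le hp0.ne']
    field_simp
  have hsum : ∑ i, |x i| ^ p ≤ Fintype.card (Fin d) * a ^ p := by
    rw [Fintype.card_fin, hda, ← Real.rpow_inv_le_iff_of_pos (by positivity) hc.le hp0, ← one_div]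
    exact hx
  have hcoef : (d : ℝ) ^ (1 / p) / (2 * c) = (2 * a)⁻¹ := by
    simp only [a]
    field_simp
  rw [hcoef, ge_iff_le, inv_mul_le_iff₀ (by positivity)]
  exact sum_sub_mul_sign_sq_le a x ε hε (sum_sq_le_card_mul_sq_of_sum_rpow_le hp ha.le x hsum)
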